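/- arXiv:1108.1515 — 2 statements merged into one kernel-verified Lean document; each statement's English description precedes it below -/
import Mathlib

section
/- Let m : (0,∞) → (0,∞) be smooth, and let (r, θ) : [0,∞) → (0,∞) × ℝ be a C² curve satisfying the geodesic equations r″ = m(r)·m′(r)·(θ′)², θ′·m(r)² = c for a constant c > 0, and the unit-speed condition (r′)² + m(r)²·(θ′)² = 1, with r′(0) = 0 (so that c = m(r(0))). If the function r is unbounded on [0,∞), then m(ρ) > m(r(0)) for every ρ > r(0), and m′(r(0)) > 0. -/
open Real Set Filter MeasureTheory
open scoped Topology NNReal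

/-- The choking lemma: if the geodesic tangent to a parallel (given in polar
coordinates by its geodesic equations, Clairaut relation and unit-speed
condition) is escaping, then `m ρ > m (r 0)` for all `ρ > r 0` and
`m' (r 0) > 0`. -/
theorem stmt_16 (m : ℝ → ℝ)
    (hsmooth : ContDiffOn ℝ (⊤ : ℕ∞) m (Set.Ioi 0))
    (hmpos : ∀ ρ > (0:ℝ), 0 < m ρ)
    (r θ : ℝ → ℝ)
    (hr : ContDiff ℝ 2 r) (hθ : ContDiff ℝ 2 θ)
    (hrpos : ∀ s ≥ (0:ℝ), 0 < r s)
    (c : ℝ) (hc : 0 < c)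
    (hgeo : ∀ s ≥ (0:ℝ),
      deriv (deriv r) s = m (r s) * deriv m (r s) * (deriv θ s) ^ 2)
    (hclairaut : ∀ s ≥ (0:ℝ), deriv θ s * (m (r s)) ^ 2 = c)
    (hunit : ∀ s ≥ (0:ℝ),
      (deriv r s) ^ 2 + (m (r s)) ^ 2 * (deriv θ s) ^ 2 = 1)
    (htangent : deriv r 0 = 0)
    (hunbounded : ∀ C : ℝ, ∃ s ≥ (0:ℝ), C < r s) :
    (∀ ρ > r 0, m (r 0) < m ρ) ∧ 0 < deriv m (r 0) := by
  have hr0 : 0 < r 0 := hrpos 0 le_rfl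
  have hrc : Continuous r := hr.continuous
  -- regularity of `r`
  have hr' : ContDiff ℝ 1 (deriv r) := by
    have h2 : (2 : WithTop ℕ∞) = 1 + 1 := by norm_num
    rw [h2] at hr
    exact (contDiff_succ_iff_deriv.mp hr).2.2
  have hdr : Differentiable ℝ r := hr.differentiable (by norm_num)
  have hdr' : Differentiable ℝ (deriv r) := hr'.differentiable one_ne_zero
  have hdrc : Continuous (deriv r) := hr'.continuous
  -- the energy identity
  have hE : ∀ s ≥ (0:ℝ), (m (r s)) ^ 2 * (deriv r s) ^ 2 = (m (r s)) ^ 2 - c ^ 2 := by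
    intro s hs
    have h1 := hunit s hs
    have h2 := hclairaut s hs
    have h2' : c ^ 2 = (deriv θ s) ^ 2 * (m (r s)) ^ 4 := by rw [← h2]; ring
    linear_combination (m (r s)) ^ 2 * h1 + h2'
  -- Clairaut constant equals `m (r 0)`
  have hceq : c = m (r 0) := by
    have h0 := hE 0 le_rfl
    rw [htangent] at h0
    have hm0 : 0 < m (r 0) := hmpos _ hr0
    nlinarith
  -- `m` is at least `c` along the trajectory
  have hmge : ∀ s ≥ (0:ℝ), c ≤ m (r s) := by
    intro s hs
    have h := hE s hs
    have hm : 0 < m (r s) := hmpos _ (hrpos s hs)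
    nlinarith [sq_nonneg (deriv r s), sq_nonneg (m (r s))]
  -- `m x ≥ c` for all `x ≥ r 0`, by the intermediate value theorem
  have hmge' : ∀ x ≥ r 0, c ≤ m x := by
    intro x hx
    obtain ⟨s2, hs2, hrs2⟩ := hunbounded x
    have hmem : x ∈ Icc (r 0) (r s2) := ⟨hx, hrs2.le⟩
    obtain ⟨s, hsmem, hrs⟩ := intermediate_value_Icc hs2 hrc.continuousOn hmem
    rw [← hrs]
    exact hmge s hsmem.1
  -- angular speed
  have hθ' : ∀ s ≥ (0:ℝ), deriv θ s = c / (m (r s)) ^ 2 := by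
    intro s hs
    have hm : m (r s) ≠ 0 := (hmpos _ (hrpos s hs)).ne'
    have := hclairaut s hs
    field_simp
    linarith [this]
  -- the effective force
  set F : ℝ → ℝ := fun x => c ^ 2 * deriv m x / (m x) ^ 3 with hF
  have hr'' : ∀ s ≥ (0:ℝ), deriv (deriv r) s = F (r s) := by
    intro s hs
    have hm : m (r s) ≠ 0 := (hmpos _ (hrpos s hs)).ne'
    rw [hgeo s hs, hθ' s hs, hF]
    field_simp
  -- Key lemma: no choking point
  have key : ∀ ρ, r 0 ≤ ρ → m ρ = c → deriv m ρ = 0 → False := by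
    intro ρ hρ hmρ hm'ρ
    have hρpos : 0 < ρ := lt_of_lt_of_le hr0 hρ
    have hIoi : Ioi (0:ℝ) ∈ 𝓝 ρ := isOpen_Ioi.mem_nhds hρpos
    -- `F` is Lipschitz near `ρ`
    have hdm : ContDiffOn ℝ 1 (deriv m) (Ioi 0) :=
      hsmooth.deriv_of_isOpen isOpen_Ioi (WithTop.coe_le_coe.mpr le_top)
    have hmC : ContDiffOn ℝ 1 m (Ioi 0) := hsmooth.of_le (by simp)
    have hFC : ContDiffOn ℝ 1 F (Ioi 0) := by
      apply ContDiffOn.div (contDiffOn_const.mul hdm) (hmC.pow 3)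
      intro x hx
      exact pow_ne_zero _ (hmpos x hx).ne'
    obtain ⟨K, t, ht, hK⟩ := (hFC.contDiffAt hIoi).exists_lipschitzOnWith
    obtain ⟨δ, hδpos, hδball⟩ := Metric.mem_nhds_iff.mp ht
    have hFρ : F ρ = 0 := by rw [hF]; simp [hm'ρ]
    have hFbound : ∀ x, |x - ρ| ≤ δ / 2 → |F x| ≤ (K : ℝ) * |x - ρ| := by
      intro x hx
      have hxmem : x ∈ t := hδball (by
        simp only [Metric.mem_ball, Real.dist_eq]; linarith)
      have hρmem : ρ ∈ t := hδball (Metric.mem_ball_self hδpos)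
      have := hK.dist_le_mul x hxmem ρ hρmem
      rw [Real.dist_eq, Real.dist_eq, hFρ, sub_zero] at this
      exact this
    -- escape time and crossing time
    obtain ⟨s2, hs2, hrs2⟩ := hunbounded (ρ + δ / 2)
    have hmem : ρ ∈ Icc (r 0) (r s2) := ⟨hρ, by linarith⟩
    obtain ⟨s1, hs1mem, hrs1⟩ := intermediate_value_Icc hs2 hrc.continuousOn hmem
    have hs1 : 0 ≤ s1 := hs1mem.1
    have hs1s2 : s1 ≤ s2 := hs1mem.2
    have hdr1 : deriv r s1 = 0 := by
      have h := hE s1 hs1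
      rw [hrs1, hmρ] at h
      have hc2 : 0 < c ^ 2 := by positivity
      have h2 : deriv r s1 ^ 2 = 0 := by nlinarith [sq_nonneg (deriv r s1)]
      exact sq_eq_zero_iff.mp h2
    -- first time `r` leaves the `δ/2`-neighborhood of `ρ`
    set A : Set ℝ := Icc s1 s2 ∩ {s | δ / 2 ≤ |r s - ρ|} with hA
    have hAne : A.Nonempty := by
      refine ⟨s2, ⟨hs1s2, le_rfl⟩, ?_⟩
      have : δ / 2 ≤ r s2 - ρ := by linarith
      calc δ / 2 ≤ r s2 - ρ := this
        _ ≤ |r s2 - ρ| := le_abs_self _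
    have hAclosed : IsClosed A :=
      isClosed_Icc.inter (isClosed_le continuous_const ((hrc.sub continuous_const).abs))
    have hAbdd : BddBelow A := ⟨s1, fun x hx => hx.1.1⟩
    set T := sInf A with hT
    have hTA : T ∈ A := hAclosed.csInf_mem hAne hAbdd
    have hs1T : s1 ≤ T := le_csInf hAne fun x hx => hx.1.1
    have hTs2 : T ≤ s2 := hTA.1.2
    have hlt : ∀ s ∈ Ico s1 T, |r s - ρ| < δ / 2 := by
      intro s hsm
      by_contra hcon
      push_neg at hcon
      have : s ∈ A := ⟨⟨hsm.1, le_trans hsm.2.le hTs2⟩, hcon⟩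
      exact absurd (csInf_le hAbdd this) (not_le.mpr hsm.2)
    -- Grönwall argument
    set v : ℝ → ℝ × ℝ := fun s => (r s - ρ, deriv r s) with hv
    have hvcont : ContinuousOn v (Icc s1 T) :=
      ((hrc.sub continuous_const).prodMk hdrc).continuousOn
    have hvderiv : ∀ s ∈ Ico s1 T,
        HasDerivWithinAt v (deriv r s, F (r s)) (Ici s) s := by
      intro s hsm
      have hsnn : (0:ℝ) ≤ s := le_trans hs1 hsm.1
      have h1 : HasDerivAt (fun u => r u - ρ) (deriv r s) s :=
        (hdr s).hasDerivAt.sub_const ρ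
      have h2 : HasDerivAt (deriv r) (F (r s)) s := by
        have := (hdr' s).hasDerivAt
        rwa [hr'' s hsnn] at this
      exact (h1.prodMk h2).hasDerivWithinAt
    have hva : ‖v s1‖ ≤ 0 := by
      rw [hv]
      simp only [hrs1, hdr1, sub_self]
      simp [Prod.norm_def]
    have hbound : ∀ s ∈ Ico s1 T,
        ‖(deriv r s, F (r s))‖ ≤ ((K : ℝ) + 1) * ‖v s‖ + 0 := by
      intro s hsm
      have h1 : ‖deriv r s‖ ≤ ‖v s‖ := norm_snd_le (v s)
      have h2 : ‖r s - ρ‖ ≤ ‖v s‖ := norm_fst_le (v s)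
      have h3 : |F (r s)| ≤ (K : ℝ) * |r s - ρ| := hFbound _ (hlt s hsm).le
      have hnn : (0:ℝ) ≤ ‖v s‖ := norm_nonneg _
      rw [Real.norm_eq_abs] at h1 h2
      have heq : ‖(deriv r s, F (r s))‖ = max |deriv r s| |F (r s)| := rfl
      rw [heq]
      apply max_le <;> nlinarith [K.coe_nonneg]
    have hgron := norm_le_gronwallBound_of_norm_deriv_right_le hvcont hvderiv hva hbound
      T ⟨hs1T, le_rfl⟩
    rw [gronwallBound_ε0_δ0] at hgron
    have hvT : v T = 0 := by
      have : ‖v T‖ = 0 := le_antisymm hgron (norm_nonneg _)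
      exact norm_eq_zero.mp this
    have hrT : r T = ρ := by
      have := congrArg Prod.fst hvT
      simp only [hv, Prod.fst_zero] at this
      linarith [this]
    have := hTA.2
    rw [mem_setOf_eq, hrT, sub_self, abs_zero] at this
    linarith
  constructor
  · -- strict inequality
    intro ρ hρ
    have h1 : c ≤ m ρ := hmge' ρ hρ.le
    rcases lt_or_eq_of_le h1 with h | h
    · rw [← hceq]; exact h
    · exfalso
      have hmin : IsLocalMin m ρ := by
        have hIoi : Ioi (r 0) ∈ 𝓝 ρ := isOpen_Ioi.mem_nhds hρ
        filter_upwards [hIoi] with x hx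
        rw [← h]
        exact hmge' x (le_of_lt hx)
      exact key ρ hρ.le h.symm hmin.deriv_eq_zero
  · -- positive derivative at r 0
    have hne : deriv m (r 0) ≠ 0 := fun h => key (r 0) le_rfl hceq.symm h
    have hge : 0 ≤ deriv m (r 0) := by
      have hda : HasDerivAt m (deriv m (r 0)) (r 0) :=
        ((hsmooth.contDiffAt (isOpen_Ioi.mem_nhds hr0)).differentiableAt (by simp)).hasDerivAt
      rw [hasDerivAt_iff_tendsto_slope] at hda
      have h2 : Tendsto (slope m (r 0)) (𝓝[>] (r 0)) (𝓝 (deriv m (r 0))) :=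
        hda.mono_left (nhdsWithin_mono _ fun x hx => ne_of_gt hx)
      refine ge_of_tendsto h2 ?_
      filter_upwards [self_mem_nhdsWithin] with x hx
      rw [slope_def_field]
      apply div_nonneg
      · have := hmge' x (le_of_lt hx)
        rw [← hceq]; linarith
      · linarith [mem_Ioi.mp hx]
    exact lt_of_le_of_ne hge (Ne.symm hne)
end

section
/- Let m : [0,∞) → ℝ be smooth with m(0) = 0, m′(0) = 1, m(r) > 0 for all r > 0, and with −m″/m non-increasing on [0,∞). If m′ is constant on [ρ,∞) for some ρ > 0, then m″ ≤ 0 on all of [0,∞), and the constant value of m′ on [ρ,∞) lies in [0,1]. -/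
open Real Set Filter MeasureTheory

/-- A von Mangoldt plane whose warping function has constant slope `s` on
`[ρ,∞)` has `m'' ≤ 0` everywhere, and `s ∈ [0,1]`. -/
theorem stmt_19 (m : ℝ → ℝ)
    (hsmooth : ContDiff ℝ (⊤ : ℕ∞) m)
    (hm0 : m 0 = 0)
    (hm'0 : deriv m 0 = 1)
    (hpos : ∀ r > (0:ℝ), 0 < m r)
    (hvM : AntitoneOn (fun r => -(deriv (deriv m) r) / m r) (Set.Ioi 0))
    (ρ s : ℝ) (hρ : 0 < ρ)
    (hconst : ∀ r ≥ ρ, deriv m r = s) :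
    (∀ r ≥ (0:ℝ), deriv (deriv m) r ≤ 0) ∧ 0 ≤ s ∧ s ≤ 1 := by
  have hdm : Differentiable ℝ m := hsmooth.differentiable (by simp)
  have hinf : ContDiff ℝ ((⊤ : ℕ∞) : WithTop ℕ∞) m := hsmooth.of_le (by simp)
  have hsm' := (contDiff_infty_iff_deriv.mp hinf).2
  have hdm' : Differentiable ℝ (deriv m) := hsm'.differentiable (by simp)
  have hcont'' : Continuous (deriv (deriv m)) :=
    (contDiff_infty_iff_deriv.mp hsm').2.continuous
  -- second derivative vanishes strictly beyond ρ
  have hzero : ∀ r > ρ, deriv (deriv m) r = 0 := by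
    intro r hr
    have heq : deriv m =ᶠ[nhds r] fun _ => s := by
      filter_upwards [Ioi_mem_nhds hr] with x hx
      exact hconst x (le_of_lt hx)
    rw [heq.deriv_eq]
    simp
  -- second derivative nonpositive on (0,∞)
  have hIoi : ∀ r > (0:ℝ), deriv (deriv m) r ≤ 0 := by
    intro r hr
    set t := max r ρ + 1 with ht
    have htρ : ρ < t := lt_of_le_of_lt (le_max_right r ρ) (by linarith [le_max_right r ρ])
    have hrt : r ≤ t := le_trans (le_max_left r ρ) (by linarith)
    have ht0 : (0:ℝ) < t := lt_trans hρ htρ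
    have h := hvM (mem_Ioi.mpr hr) (mem_Ioi.mpr ht0) hrt
    have hzt : deriv (deriv m) t = 0 := hzero t htρ
    simp only [hzt, neg_zero, zero_div] at h
    have hmr : 0 < m r := hpos r hr
    have h2 : 0 ≤ -(deriv (deriv m) r) := by
      have := mul_nonneg h hmr.le
      rwa [div_mul_cancel₀ _ hmr.ne'] at this
    linarith
  -- extend to r = 0 by continuity
  have hall : ∀ r ≥ (0:ℝ), deriv (deriv m) r ≤ 0 := by
    intro r hr
    rcases eq_or_lt_of_le hr with h0 | h0
    · subst h0
      have htd : Tendsto (deriv (deriv m)) (nhdsWithin 0 (Ioi 0))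
          (nhds (deriv (deriv m) 0)) :=
        (hcont''.continuousAt).continuousWithinAt
      refine le_of_tendsto htd ?_
      filter_upwards [self_mem_nhdsWithin] with x hx
      exact hIoi x hx
    · exact hIoi r h0
  refine ⟨hall, ?_, ?_⟩
  · -- s ≥ 0 : otherwise m eventually negative
    by_contra hs
    push_neg at hs
    set r := ρ + (m ρ + 1) / (-s) with hrdef
    have hmρ : 0 < m ρ := hpos ρ hρ
    have hns : 0 < -s := by linarith
    have hfrac : 0 < (m ρ + 1) / (-s) := div_pos (by linarith) hns
    have hρr : ρ < r := by rw [hrdef]; linarith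
    obtain ⟨c, hc, hceq⟩ := exists_hasDerivAt_eq_slope m (deriv m) hρr
      (hdm.continuous.continuousOn)
      (fun x _ => (hdm x).hasDerivAt)
    have hcs : deriv m c = s := hconst c hc.1.le
    rw [hcs] at hceq
    have hne : r - ρ ≠ 0 := sub_ne_zero.mpr (ne_of_gt hρr)
    rw [eq_div_iff hne] at hceq
    have hrρ : r - ρ = (m ρ + 1) / (-s) := by rw [hrdef]; ring
    have hkey : s * (r - ρ) = -(m ρ + 1) := by
      rw [hrρ, mul_div_assoc', div_eq_iff hns.ne']; ring
    have : m r = -1 := by linarith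
    have := hpos r (lt_trans hρ hρr)
    linarith
  · -- s ≤ 1 : deriv m is antitone on [0,ρ]
    have hanti : AntitoneOn (deriv m) (Icc 0 ρ) := by
      apply antitoneOn_of_deriv_nonpos (convex_Icc 0 ρ) hdm'.continuous.continuousOn
        (hdm'.differentiableOn)
      intro x hx
      rw [interior_Icc] at hx
      exact hIoi x hx.1
    have := hanti (left_mem_Icc.mpr hρ.le) (right_mem_Icc.mpr hρ.le) hρ.le
    rw [hm'0, hconst ρ le_rfl] at this
    exact this
end
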